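/- arXiv:2410.21393 — 5 statements merged into one kernel-verified Lean document; each statement's English description precedes it below -/
import Mathlib

section
/- Let k ≥ 2 be an integer and let ε ∈ [0, 1−1/k²] and q ∈ [0,1] be real numbers. If 1−ε ≤ (√(q/k²) + √((1−q)(1−1/k²)))², then q ≤ ε + (1−2ε)/k² + 2√((k²−1)ε(1−ε))/k². -/
/-!
Write `√q = cos φ`, `1/k = cos θ` and `√(1 - ε) = cos δ` with angles in `[0, π/2]`. The
hypothesis says `cos (φ - θ) ≥ cos δ`, i.e. `|φ - θ| ≤ δ`, and `ε ≤ 1 - 1/k²` says `δ ≤ θ`.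
Hence `θ - δ ≤ φ`, so `q = cos² φ ≤ cos² (θ - δ)`, and expanding `cos (θ - δ)` gives the bound.
Algebraically, the angle difference becomes a rotation of the unit circle by `(cos θ, sin θ)`.
-/

open Real

/-- On the arc `s ≤ p` of the unit circle, the linear form `(a, b)` is maximal at the endpoint
`(s, t)`, because `(a, b)` points beyond that endpoint. -/
lemma mul_add_mul_le_of_unit_circle {a b p r s t : ℝ} (hs : 0 ≤ s) (ht : 0 ≤ t)
    (hpr : p ^ 2 + r ^ 2 = 1) (hst : s ^ 2 + t ^ 2 = 1) (has : a ≤ s) (htb : t ≤ b)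
    (hsp : s ≤ p) : a * p + b * r ≤ a * s + b * t := by
  have hrt : r ≤ t := by nlinarith
  have htr : -t ≤ r := by nlinarith
  nlinarith [mul_nonneg (sub_nonneg.2 hsp) (add_nonneg (sub_nonneg.2 htr) ht)]

lemma le_mul_add_mul_of_unit_circle {a b x y s t : ℝ} (ha : 0 ≤ a) (hb : 0 ≤ b)
    (hs : 0 ≤ s) (ht : 0 ≤ t)
    (hab : a ^ 2 + b ^ 2 = 1) (hxy : x ^ 2 + y ^ 2 = 1) (hst : s ^ 2 + t ^ 2 = 1)
    (has : a ≤ s) (h : s ≤ a * x + b * y) : x ≤ a * s + b * t := by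
  have htb : t ≤ b := by nlinarith
  -- `(a * x + b * y, b * x - a * y)` is `(x, y)` rotated by the angle of `(a, b)`.
  have hpr : (a * x + b * y) ^ 2 + (b * x - a * y) ^ 2 = 1 := by
    linear_combination (x ^ 2 + y ^ 2) * hab + hxy
  have hx : x = a * (a * x + b * y) + b * (b * x - a * y) := by
    linear_combination -x * hab
  rw [hx]
  exact mul_add_mul_le_of_unit_circle hs ht hpr hst has htb h

lemma sqrt_le_of_sqrt_one_sub_le {c ε q : ℝ} (hc : 0 ≤ c) (hε0 : 0 ≤ ε) (hεc : ε ≤ 1 - c)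
    (hq0 : 0 ≤ q) (hq1 : q ≤ 1) (h : √(1 - ε) ≤ √(q * c) + √((1 - q) * (1 - c))) :
    √q ≤ √c * √(1 - ε) + √(1 - c) * √ε := by
  apply le_mul_add_mul_of_unit_circle (sqrt_nonneg _) (sqrt_nonneg _) (sqrt_nonneg _)
    (sqrt_nonneg _) (y := √(1 - q))
  · rw [sq_sqrt hc, sq_sqrt (by linarith)]; ring
  · rw [sq_sqrt hq0, sq_sqrt (by linarith)]; ring
  · rw [sq_sqrt (by linarith), sq_sqrt hε0]; ring
  · exact sqrt_le_sqrt (by linarith)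
  · rwa [sqrt_mul hq0, sqrt_mul (by linarith), mul_comm √q, mul_comm √(1 - q)] at h

/-- Let `k ≥ 2`, `ε ∈ [0, 1−1/k²]`, `q ∈ [0,1]`.
If `1−ε ≤ (√(q/k²) + √((1−q)(1−1/k²)))²`, then
`q ≤ ε + (1−2ε)/k² + 2√((k²−1)ε(1−ε))/k²`. -/
theorem q_upper_bound (k : ℕ) (hk : 2 ≤ k) (ε q : ℝ)
    (hε0 : 0 ≤ ε) (hε1 : ε ≤ 1 - 1 / (k : ℝ) ^ 2)
    (hq0 : 0 ≤ q) (hq1 : q ≤ 1)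
    (h : 1 - ε ≤ (Real.sqrt (q / (k : ℝ) ^ 2)
        + Real.sqrt ((1 - q) * (1 - 1 / (k : ℝ) ^ 2))) ^ 2) :
    q ≤ ε + (1 - 2 * ε) / (k : ℝ) ^ 2
        + 2 * Real.sqrt (((k : ℝ) ^ 2 - 1) * ε * (1 - ε)) / (k : ℝ) ^ 2 := by
  have hk0 : (0 : ℝ) < k := Nat.cast_pos.2 (by omega)
  have hk1 : (0 : ℝ) ≤ (k : ℝ) ^ 2 - 1 :=
    sub_nonneg.2 (one_le_pow₀ (by exact_mod_cast (by omega : 1 ≤ k)))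
  have hc : 0 ≤ 1 / (k : ℝ) ^ 2 := by positivity
  rw [div_eq_mul_one_div q] at h
  have hroot := sqrt_le_of_sqrt_one_sub_le hc hε0 hε1 hq0 hq1
    ((sqrt_le_left (by positivity)).2 h)
  have hsqrt_c : √(1 / (k : ℝ) ^ 2) = 1 / k := by
    rw [sqrt_div' _ (sq_nonneg _), sqrt_one, sqrt_sq hk0.le]
  have hsqrt_one_sub_c : √(1 - 1 / (k : ℝ) ^ 2) = √((k : ℝ) ^ 2 - 1) / k := by
    rw [show 1 - 1 / (k : ℝ) ^ 2 = ((k : ℝ) ^ 2 - 1) / (k : ℝ) ^ 2 by field_simp,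
      sqrt_div' _ (sq_nonneg _), sqrt_sq hk0.le]
  calc q = √q ^ 2 := (sq_sqrt hq0).symm
    _ ≤ (√(1 / (k : ℝ) ^ 2) * √(1 - ε) + √(1 - 1 / (k : ℝ) ^ 2) * √ε) ^ 2 :=
      pow_le_pow_left₀ (sqrt_nonneg q) hroot 2
    _ = _ := by
      rw [hsqrt_c, hsqrt_one_sub_c, sqrt_mul (mul_nonneg hk1 hε0), sqrt_mul hk1]
      field_simp
      linear_combination sq_sqrt (by linarith : 0 ≤ 1 - ε) + √((k : ℝ) ^ 2 - 1) ^ 2 * sq_sqrt hε0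
        + ε * sq_sqrt hk1
end

section
/- For real numbers ε ∈ [0,1] and J ∈ (ε, 1−ε], the function f(J,ε) := (1/2)·log₂[((√(J(1−J)) + √(ε(1−ε)))/(J−ε))² + 1] is monotonically decreasing in J (for fixed ε) on the interval (ε, 1−ε]. -/
/-- For `ε ∈ [0,1]`, the function
`f(J,ε) = (1/2)·log₂[((√(J(1−J)) + √(ε(1−ε)))/(J−ε))² + 1]`
is monotonically decreasing in `J` on the interval `(ε, 1−ε]`. -/
theorem f_antitone_in_J (ε : ℝ) (hε0 : 0 ≤ ε) (hε1 : ε ≤ 1) :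
    AntitoneOn
      (fun J : ℝ => (1 / 2) * Real.logb 2
        (((Real.sqrt (J * (1 - J)) + Real.sqrt (ε * (1 - ε))) / (J - ε)) ^ 2 + 1))
      (Set.Ioc ε (1 - ε)) := by
  intro J₁ hJ₁ J₂ hJ₂ h12
  obtain ⟨h1l, h1r⟩ := hJ₁
  obtain ⟨h2l, h2r⟩ := hJ₂
  simp only
  have d1 : (0:ℝ) < J₁ - ε := by linarith
  have d2 : (0:ℝ) < J₂ - ε := by linarith
  have a1 : (0:ℝ) ≤ J₁ * (1 - J₁) := by nlinarith
  have a2 : (0:ℝ) ≤ J₂ * (1 - J₂) := by nlinarith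
  have c0 : (0:ℝ) ≤ Real.sqrt (ε * (1 - ε)) := Real.sqrt_nonneg _
  have s1 : (0:ℝ) ≤ Real.sqrt (J₁ * (1 - J₁)) := Real.sqrt_nonneg _
  have s2 : (0:ℝ) ≤ Real.sqrt (J₂ * (1 - J₂)) := Real.sqrt_nonneg _
  -- the quotient is antitone
  have key : (Real.sqrt (J₂ * (1 - J₂)) + Real.sqrt (ε * (1 - ε))) / (J₂ - ε) ≤
      (Real.sqrt (J₁ * (1 - J₁)) + Real.sqrt (ε * (1 - ε))) / (J₁ - ε) := by
    rw [div_le_div_iff₀ d2 d1]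
    have hsq : Real.sqrt (J₂ * (1 - J₂)) * (J₁ - ε) ≤
        Real.sqrt (J₁ * (1 - J₁)) * (J₂ - ε) := by
      have e1 : Real.sqrt (J₂ * (1 - J₂)) * (J₁ - ε) =
          Real.sqrt (J₂ * (1 - J₂) * (J₁ - ε) ^ 2) := by
        rw [Real.sqrt_mul a2, Real.sqrt_sq d1.le]
      have e2 : Real.sqrt (J₁ * (1 - J₁)) * (J₂ - ε) =
          Real.sqrt (J₁ * (1 - J₁) * (J₂ - ε) ^ 2) := by
        rw [Real.sqrt_mul a1, Real.sqrt_sq d2.le]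
      rw [e1, e2]
      apply Real.sqrt_le_sqrt
      have hbr : 0 ≤ ε * (1 - ε) * ((J₁ - ε) + (J₂ - ε)) + (J₁ - ε) * (J₂ - ε) * (1 - 2 * ε) := by
        have h2e : 0 ≤ 1 - 2 * ε := by linarith
        have := mul_nonneg (mul_nonneg hε0 (by linarith : (0:ℝ) ≤ 1 - ε)) (by linarith : (0:ℝ) ≤ (J₁ - ε) + (J₂ - ε))
        have := mul_nonneg (mul_nonneg d1.le d2.le) h2e
        linarith
      nlinarith [mul_nonneg (sub_nonneg.mpr h12) hbr]
    have hc : Real.sqrt (ε * (1 - ε)) * (J₁ - ε) ≤ Real.sqrt (ε * (1 - ε)) * (J₂ - ε) := by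
      apply mul_le_mul_of_nonneg_left (by linarith) c0
    nlinarith [hsq, hc]
  have hq2 : (0:ℝ) ≤ (Real.sqrt (J₂ * (1 - J₂)) + Real.sqrt (ε * (1 - ε))) / (J₂ - ε) :=
    div_nonneg (by linarith) d2.le
  have hsqle : ((Real.sqrt (J₂ * (1 - J₂)) + Real.sqrt (ε * (1 - ε))) / (J₂ - ε)) ^ 2 ≤
      ((Real.sqrt (J₁ * (1 - J₁)) + Real.sqrt (ε * (1 - ε))) / (J₁ - ε)) ^ 2 :=
    pow_le_pow_left₀ hq2 key 2
  have hpos2 : (0:ℝ) < ((Real.sqrt (J₂ * (1 - J₂)) + Real.sqrt (ε * (1 - ε))) / (J₂ - ε)) ^ 2 + 1 := by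
    positivity
  have hlog : Real.logb 2
      (((Real.sqrt (J₂ * (1 - J₂)) + Real.sqrt (ε * (1 - ε))) / (J₂ - ε)) ^ 2 + 1) ≤
      Real.logb 2
      (((Real.sqrt (J₁ * (1 - J₁)) + Real.sqrt (ε * (1 - ε))) / (J₁ - ε)) ^ 2 + 1) :=
    Real.logb_le_logb_of_le (by norm_num) hpos2 (by linarith)
  linarith
end

section
/- For real numbers ε ∈ [0,1] and J ∈ (ε, 1−ε], the function f(J,ε) := (1/2)·log₂[((√(J(1−J)) + √(ε(1−ε)))/(J−ε))² + 1] is monotonically increasing in ε (for fixed J, restricted to pairs satisfying ε < J ≤ 1−ε). -/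
/-- The function `f(J,ε) = (1/2)·log₂[((√(J(1−J)) + √(ε(1−ε)))/(J−ε))² + 1]`
is monotonically increasing in `ε`, for pairs satisfying `0 ≤ ε` and `ε < J ≤ 1−ε`. -/
theorem f_monotone_in_eps (J ε₁ ε₂ : ℝ) (h1 : 0 ≤ ε₁) (h12 : ε₁ ≤ ε₂)
    (h2 : ε₂ < J) (hJ : J ≤ 1 - ε₂) :
    (1 / 2) * Real.logb 2
        (((Real.sqrt (J * (1 - J)) + Real.sqrt (ε₁ * (1 - ε₁))) / (J - ε₁)) ^ 2 + 1)
      ≤ (1 / 2) * Real.logb 2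
        (((Real.sqrt (J * (1 - J)) + Real.sqrt (ε₂ * (1 - ε₂))) / (J - ε₂)) ^ 2 + 1) := by
  have hd2 : (0:ℝ) < J - ε₂ := by linarith
  have hd1 : (0:ℝ) < J - ε₁ := by linarith
  have hprod : ε₁ * (1 - ε₁) ≤ ε₂ * (1 - ε₂) := by nlinarith
  have hnum : Real.sqrt (J * (1 - J)) + Real.sqrt (ε₁ * (1 - ε₁))
      ≤ Real.sqrt (J * (1 - J)) + Real.sqrt (ε₂ * (1 - ε₂)) := by
    gcongr
  have hnum0 : 0 ≤ Real.sqrt (J * (1 - J)) + Real.sqrt (ε₁ * (1 - ε₁)) := by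
    positivity
  have hratio : (Real.sqrt (J * (1 - J)) + Real.sqrt (ε₁ * (1 - ε₁))) / (J - ε₁)
      ≤ (Real.sqrt (J * (1 - J)) + Real.sqrt (ε₂ * (1 - ε₂))) / (J - ε₂) :=
    div_le_div₀ (by positivity) hnum hd2 (by linarith)
  have hsq : ((Real.sqrt (J * (1 - J)) + Real.sqrt (ε₁ * (1 - ε₁))) / (J - ε₁)) ^ 2
      ≤ ((Real.sqrt (J * (1 - J)) + Real.sqrt (ε₂ * (1 - ε₂))) / (J - ε₂)) ^ 2 := by
    apply pow_le_pow_left₀ (by positivity) hratio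
  have h1p : (0:ℝ) < ((Real.sqrt (J * (1 - J)) + Real.sqrt (ε₁ * (1 - ε₁))) / (J - ε₁)) ^ 2 + 1 := by
    positivity
  exact mul_le_mul_of_nonneg_left
    (Real.logb_le_logb_of_le (b := 2) (by norm_num) h1p (by linarith)) (by norm_num)
end

section
/- Let ε ∈ [0,1], k ≥ 2 an integer, and J ∈ (ε, 1−ε] a real number. Then the inequality J ≤ ε + (1−2ε)/k² + 2√((k²−1)ε(1−ε))/k² holds if and only if k² − 1 ≤ ((√(J(1−J)) + √(ε(1−ε)))/(J−ε))². -/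
private lemma aux_iff (d s z x y K : ℝ) (hd : 0 < d) (hs : 0 ≤ s) (hz : 0 ≤ z)
    (hx : 0 ≤ x) (hy : 0 ≤ y) (hK : 1 ≤ K)
    (hx2 : x ^ 2 = (K - 1) * z ^ 2) (hy2 : y ^ 2 = z ^ 2 + d * s) :
    ((K - 1) * d - s ≤ 2 * x ↔ d * ((K - 1) * d - s) ≤ 2 * (z ^ 2 + y * z)) := by
  constructor
  · intro h
    have key : d * x - z ^ 2 ≤ y * z := by
      rcases le_or_gt (d * x - z ^ 2) 0 with h0 | h0
      · exact h0.trans (mul_nonneg hy hz)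
      · have hsq : (d * x - z ^ 2) ^ 2 ≤ (y * z) ^ 2 := by
          have e : (y * z) ^ 2 - (d * x - z ^ 2) ^ 2
              = d * z ^ 2 * (2 * x - ((K - 1) * d - s)) := by
            linear_combination z ^ 2 * hy2 - d ^ 2 * hx2
          nlinarith [mul_nonneg (mul_nonneg hd.le (sq_nonneg z))
            (by linarith : (0:ℝ) ≤ 2 * x - ((K - 1) * d - s)), e]
        nlinarith [mul_nonneg hy hz, hsq, h0]
    nlinarith [mul_le_mul_of_nonneg_left h hd.le, key]
  · intro h
    rcases le_or_gt ((K - 1) * d - s) 0 with h0 | h0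
    · linarith
    rcases le_or_gt (d * ((K - 1) * d - s) - 2 * z ^ 2) 0 with h1 | h1
    · -- M > 0 and d*M ≤ 2z² : then M² ≤ (K-1)d*M ≤ 2(K-1)z² = 2x² ≤ 4x²
      have hM2 : ((K - 1) * d - s) ^ 2 ≤ (2 * x) ^ 2 := by
        nlinarith [mul_nonneg h0.le hs, mul_le_mul_of_nonneg_left h1 (by linarith : (0:ℝ) ≤ K - 1)]
      nlinarith [hM2, hx, h0]
    · have hsq : (d * ((K - 1) * d - s) - 2 * z ^ 2) ^ 2 ≤ (2 * (y * z)) ^ 2 := by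
        have := pow_le_pow_left₀ h1.le (by linarith : d * ((K - 1) * d - s) - 2 * z ^ 2 ≤ 2 * (y * z)) 2
        linarith
      have hM2 : ((K - 1) * d - s) ^ 2 ≤ (2 * x) ^ 2 := by
        nlinarith [hsq, mul_pos hd hd, sq_nonneg ((K - 1) * d - s - 2 * x)]
      nlinarith [hM2, hx, h0]

/-- For `ε ∈ [0,1]`, integer `k ≥ 2`, and `J ∈ (ε, 1−ε]`:
`J ≤ ε + (1−2ε)/k² + 2√((k²−1)ε(1−ε))/k²` holds if and only if
`k² − 1 ≤ ((√(J(1−J)) + √(ε(1−ε)))/(J−ε))²`. -/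
theorem key_number_iff (k : ℕ) (hk : 2 ≤ k) (ε J : ℝ) (hε0 : 0 ≤ ε) (hε1 : ε ≤ 1)
    (hJ1 : ε < J) (hJ2 : J ≤ 1 - ε) :
    (J ≤ ε + (1 - 2 * ε) / (k : ℝ) ^ 2
        + 2 * Real.sqrt (((k : ℝ) ^ 2 - 1) * ε * (1 - ε)) / (k : ℝ) ^ 2)
      ↔ (k : ℝ) ^ 2 - 1
          ≤ ((Real.sqrt (J * (1 - J)) + Real.sqrt (ε * (1 - ε))) / (J - ε)) ^ 2 := by
  have hk2 : (2:ℝ) ≤ (k:ℝ) := by exact_mod_cast hk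
  have hK : (4:ℝ) ≤ (k:ℝ) ^ 2 := by nlinarith
  set K : ℝ := (k:ℝ) ^ 2 with hKdef
  have hKpos : (0:ℝ) < K := by linarith
  have hd : (0:ℝ) < J - ε := by linarith
  have hs : (0:ℝ) ≤ 1 - J - ε := by linarith
  have ha : (0:ℝ) ≤ ε * (1 - ε) := mul_nonneg hε0 (by linarith)
  have hb : (0:ℝ) ≤ J * (1 - J) := mul_nonneg (by linarith) (by linarith)
  have hc : (0:ℝ) ≤ (K - 1) * ε * (1 - ε) := by
    apply mul_nonneg (mul_nonneg (by linarith) hε0) (by linarith)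
  set z : ℝ := Real.sqrt (ε * (1 - ε)) with hzdef
  set y : ℝ := Real.sqrt (J * (1 - J)) with hydef
  set x : ℝ := Real.sqrt ((K - 1) * ε * (1 - ε)) with hxdef
  have hz : 0 ≤ z := Real.sqrt_nonneg _
  have hy : 0 ≤ y := Real.sqrt_nonneg _
  have hx : 0 ≤ x := Real.sqrt_nonneg _
  have hz2 : z ^ 2 = ε * (1 - ε) := Real.sq_sqrt ha
  have hy2 : y ^ 2 = J * (1 - J) := Real.sq_sqrt hb
  have hx2 : x ^ 2 = (K - 1) * ε * (1 - ε) := Real.sq_sqrt hc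
  have hx2' : x ^ 2 = (K - 1) * z ^ 2 := by rw [hx2, hz2]; ring
  have hy2' : y ^ 2 = z ^ 2 + (J - ε) * (1 - J - ε) := by rw [hy2, hz2]; ring
  have main := aux_iff (J - ε) (1 - J - ε) z x y K hd hs hz hx hy (by linarith)
    hx2' hy2'
  constructor
  · intro h
    have h1 : (K - 1) * (J - ε) - (1 - J - ε) ≤ 2 * x := by
      have := mul_le_mul_of_nonneg_left h hKpos.le
      have hKne : K ≠ 0 := ne_of_gt hKpos
      field_simp at this
      nlinarith [this]
    have h2 := main.mp h1
    rw [div_pow, le_div_iff₀ (by positivity : (0:ℝ) < (J - ε) ^ 2)]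
    nlinarith [h2]
  · intro h
    rw [div_pow, le_div_iff₀ (by positivity : (0:ℝ) < (J - ε) ^ 2)] at h
    have h2 : (J - ε) * ((K - 1) * (J - ε) - (1 - J - ε)) ≤ 2 * (z ^ 2 + y * z) := by
      nlinarith [h, hy2']
    have h1 := main.mpr h2
    rw [show ε + (1 - 2 * ε) / K + 2 * x / K = ε + ((1 - 2 * ε) + 2 * x) / K from by ring,
      ← sub_le_iff_le_add', le_div_iff₀ hKpos]
    linarith
end

section
/- Let k ≥ 2 be an integer and ε ∈ [0,1]. The inequality (k²−1)(2ε−1)/(k²−2) ≤ √((k²−1)ε(1−ε)) holds if and only if ε ∈ [0, 1−1/k²]. -/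
set_option maxHeartbeats 1000000 in
/-- Let `k ≥ 2` be an integer and `ε ∈ [0,1]`.  Then
`(k²−1)(2ε−1)/(k²−2) ≤ √((k²−1)ε(1−ε))` if and only if `ε ∈ [0, 1−1/k²]`. -/
theorem eps_range_iff (k : ℕ) (hk : 2 ≤ k) (ε : ℝ) (hε0 : 0 ≤ ε) (hε1 : ε ≤ 1) :
    ((k : ℝ) ^ 2 - 1) * (2 * ε - 1) / ((k : ℝ) ^ 2 - 2)
        ≤ Real.sqrt (((k : ℝ) ^ 2 - 1) * ε * (1 - ε))
      ↔ ε ≤ 1 - 1 / (k : ℝ) ^ 2 := by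
  have hc : (2 : ℝ) ≤ (k : ℝ) := by exact_mod_cast hk
  set c : ℝ := (k : ℝ) with hcdef
  clear_value c
  have hc2 : 2 ≤ c ^ 2 - 2 := by nlinarith
  have hc2pos : 0 < c ^ 2 - 2 := by linarith
  have hc1 : 3 ≤ c ^ 2 - 1 := by nlinarith
  have hsq : 0 ≤ (c ^ 2 - 1) * ε * (1 - ε) :=
    mul_nonneg (mul_nonneg (by nlinarith) hε0) (by linarith)
  have hk2 : (4 : ℝ) ≤ c ^ 2 := by nlinarith
  constructor
  · intro h
    by_cases hhalf : ε ≤ 1 / 2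
    · have : 1 / c ^ 2 ≤ 1 / 4 := by
        apply div_le_div_of_nonneg_left <;> linarith
      linarith
    · push_neg at hhalf
      have hpos : 0 ≤ (c ^ 2 - 1) * (2 * ε - 1) / (c ^ 2 - 2) :=
        div_nonneg (mul_nonneg (by linarith) (by linarith)) (le_of_lt hc2pos)
      have h2 : ((c ^ 2 - 1) * (2 * ε - 1) / (c ^ 2 - 2)) ^ 2
          ≤ (c ^ 2 - 1) * ε * (1 - ε) := by
        have := Real.sq_sqrt hsq
        nlinarith [Real.sqrt_nonneg ((c ^ 2 - 1) * ε * (1 - ε)), h]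
      rw [div_pow] at h2
      have h3 : ((c ^ 2 - 1) * (2 * ε - 1)) ^ 2
          ≤ (c ^ 2 - 1) * ε * (1 - ε) * (c ^ 2 - 2) ^ 2 := by
        rw [div_le_iff₀ (by positivity)] at h2
        linarith
      -- factor: (ε - (1 - 1/c²))(ε - 1/c²) ≤ 0
      by_contra hcon
      push_neg at hcon
      have he1 : 1 - 1 / c ^ 2 < ε := hcon
      have hcpos : (0:ℝ) < c ^ 2 := by positivity
      have key : (c ^ 2 * ε - (c ^ 2 - 1)) * (c ^ 2 * ε - 1) ≤ 0 := by
        nlinarith [sq_nonneg (c^2 - 1), sq_nonneg ε]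
      have h4 : 0 < c ^ 2 * ε - (c ^ 2 - 1) := by
        have : c ^ 2 * (1 - 1 / c ^ 2) < c ^ 2 * ε := by
          apply mul_lt_mul_of_pos_left he1 hcpos
        rw [mul_sub, mul_one_div, div_self (ne_of_gt hcpos)] at this
        linarith
      have h5 : 0 < c ^ 2 * ε - 1 := by nlinarith
      nlinarith
  · intro h
    by_cases hhalf : ε ≤ 1 / 2
    · have hnum : (c ^ 2 - 1) * (2 * ε - 1) ≤ 0 := by nlinarith
      have : (c ^ 2 - 1) * (2 * ε - 1) / (c ^ 2 - 2) ≤ 0 :=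
        div_nonpos_of_nonpos_of_nonneg hnum (le_of_lt hc2pos)
      linarith [Real.sqrt_nonneg ((c ^ 2 - 1) * ε * (1 - ε))]
    · push_neg at hhalf
      have hLnn : 0 ≤ (c ^ 2 - 1) * (2 * ε - 1) / (c ^ 2 - 2) :=
        div_nonneg (mul_nonneg (by linarith) (by linarith)) (le_of_lt hc2pos)
      rw [Real.le_sqrt hLnn hsq, div_pow, div_le_iff₀ (by positivity)]
      have hcpos : (0:ℝ) < c ^ 2 := by positivity
      have h6 : c ^ 2 * ε - (c ^ 2 - 1) ≤ 0 := by
        have := mul_le_mul_of_nonneg_left h (le_of_lt hcpos)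
        rw [mul_sub, mul_one_div, div_self (ne_of_gt hcpos)] at this
        linarith
      have h7 : 0 ≤ c ^ 2 * ε - 1 := by nlinarith
      nlinarith [mul_nonpos_of_nonpos_of_nonneg h6 h7]
end
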